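/- Let (Ω, F, (F_t)_{t∈[0,T]}, P) be a filtered probability space, and let (X_t)_{t∈[0,T]} be an adapted real-valued process with E[X_t²] < ∞ for all t. Let (Z_t)_{t∈[0,T]} be an adapted nonnegative process and let C ≥ 0, ϑ ∈ (0,1] be such that E[Z_t²] ≤ C² for all t ∈ [0,T] and, for all 0 ≤ t ≤ t+h ≤ T, E[(X_{t+h} − X_t)² | F_t] ≤ h^ϑ Z_t almost surely. Then for all t, h with 0 ≤ t−h ≤ t ≤ t+h ≤ T: E[ (min(|X_{t+h} − X_t|, 1))² · (min(|X_t − X_{t−h}|, 1))² ] ≤ E[ (X_{t+h} − X_t)² · |X_t − X_{t−h}| ] ≤ C^{3/2} · h^{3ϑ/2}. -/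

import Mathlib

/-!
Write `a = X_{t+h} - X_t` and `b = X_t - X_{t-h}`. The first inequality is pointwise. For the
second, `|b|` is `F_t`-measurable, so conditioning on `F_t` gives
`E[a² |b|] ≤ h^ϑ E[Z_t |b|]`; since `|b|` need not be bounded, this is proved for the truncations
`min |b| n` and passed to the limit by monotone convergence. Cauchy–Schwarz bounds `E[Z_t |b|]` by
`‖Z_t‖₂ ‖b‖₂ ≤ C ‖b‖₂`, and conditioning on `F_{t-h}` gives `E[b²] ≤ h^ϑ E[Z_{t-h}] ≤ h^ϑ C`.
Altogether `E[a² |b|] ≤ h^ϑ · C · (h^ϑ C)^{1/2} = C^{3/2} h^{3ϑ/2}`.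
-/

open MeasureTheory Filter Topology

section

variable {Ω : Type*} {m m0 : MeasurableSpace Ω} {μ : Measure Ω}

lemma integral_le_of_integral_sq_le [IsProbabilityMeasure μ] {f : Ω → ℝ} (hf : MemLp f 2 μ)
    {C : ℝ} (hC : 0 ≤ C) (h : ∫ ω, f ω ^ 2 ∂μ ≤ C ^ 2) : ∫ ω, f ω ∂μ ≤ C := by
  have hvar := ProbabilityTheory.variance_nonneg f μ
  rw [ProbabilityTheory.variance_eq_sub hf] at hvar
  have hsq : (∫ ω, f ω ∂μ) ^ 2 ≤ C ^ 2 := by simp only [Pi.pow_apply] at hvar; linarith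
  exact (le_abs_self _).trans (abs_le_of_sq_le_sq hsq hC)

lemma integral_mul_le_sqrt_mul_sqrt {f g : Ω → ℝ} (hf0 : 0 ≤ᵐ[μ] f) (hg0 : 0 ≤ᵐ[μ] g)
    (hf : MemLp f 2 μ) (hg : MemLp g 2 μ) :
    ∫ ω, f ω * g ω ∂μ ≤ √(∫ ω, f ω ^ 2 ∂μ) * √(∫ ω, g ω ^ 2 ∂μ) := by
  have hHolder := integral_mul_le_Lp_mul_Lq_of_nonneg Real.HolderConjugate.two_two hf0 hg0
    (by simpa using hf) (by simpa using hg)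
  simpa [Real.sqrt_eq_rpow, Real.rpow_two] using hHolder

lemma mul_sqrt_eq_rpow_three_halves {x : ℝ} (hx : 0 ≤ x) : x * √x = x ^ ((3 : ℝ) / 2) := by
  rw [Real.sqrt_eq_rpow, ← Real.rpow_one_add' hx (by norm_num)]
  norm_num

lemma integrable_and_integral_le_of_tendsto_of_monotone {f : ℕ → Ω → ℝ} {F : Ω → ℝ} {B : ℝ}
    (hf : ∀ n, Integrable (f n) μ) (hf0 : ∀ n, 0 ≤ᵐ[μ] f n)
    (h_mono : ∀ᵐ ω ∂μ, Monotone fun n ↦ f n ω)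
    (h_tendsto : ∀ᵐ ω ∂μ, Tendsto (fun n ↦ f n ω) atTop (𝓝 (F ω)))
    (hB : ∀ n, ∫ ω, f n ω ∂μ ≤ B) :
    Integrable F μ ∧ ∫ ω, F ω ∂μ ≤ B := by
  have hF0 : 0 ≤ᵐ[μ] F := by
    filter_upwards [h_tendsto, ae_all_iff.2 hf0] with ω hω hω0
    exact ge_of_tendsto' hω hω0
  have hlintegral : ∫⁻ ω, ENNReal.ofReal (F ω) ∂μ ≤ ENNReal.ofReal B := by
    refine le_of_tendsto' (lintegral_tendsto_of_tendsto_of_monotone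
      (fun n ↦ (hf n).aemeasurable.ennreal_ofReal) ?_ ?_) fun n ↦ ?_
    · filter_upwards [h_mono] with ω hω n k hnk using ENNReal.ofReal_le_ofReal (hω hnk)
    · filter_upwards [h_tendsto] with ω hω using (ENNReal.continuous_ofReal.tendsto _).comp hω
    · rw [← ofReal_integral_eq_lintegral_ofReal (hf n) (hf0 n)]
      exact ENNReal.ofReal_le_ofReal (hB n)
  have hF : Integrable F μ :=
    ⟨aestronglyMeasurable_of_tendsto_ae _ (fun n ↦ (hf n).1) h_tendsto,
      (hasFiniteIntegral_iff_ofReal hF0).2 (hlintegral.trans_lt ENNReal.ofReal_lt_top)⟩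
  exact ⟨hF, le_of_tendsto' (integral_tendsto_of_tendsto_of_monotone hf hF h_mono h_tendsto) hB⟩

variable {f g W : Ω → ℝ}

lemma integral_le_integral_of_condExp_le (hm : m ≤ m0) [SigmaFinite (μ.trim hm)]
    (hg : Integrable g μ) (hfg : μ[f|m] ≤ᵐ[μ] g) :
    ∫ ω, f ω ∂μ ≤ ∫ ω, g ω ∂μ :=
  (integral_condExp hm).symm.trans_le (integral_mono_ae integrable_condExp hg hfg)

lemma integral_mul_le_of_condExp_le_of_bounded (hm : m ≤ m0) [SigmaFinite (μ.trim hm)]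
    (hW : StronglyMeasurable[m] W) (hW0 : 0 ≤ W) {c : ℝ}
    (hWc : ∀ ω, W ω ≤ c) (hf : Integrable f μ) (hg : Integrable g μ) (hfg : μ[f|m] ≤ᵐ[μ] g) :
    ∫ ω, f ω * W ω ∂μ ≤ ∫ ω, g ω * W ω ∂μ := by
  have hW_meas : AEStronglyMeasurable W μ := (hW.mono hm).aestronglyMeasurable
  have hW_bound : ∀ᵐ ω ∂μ, ‖W ω‖ ≤ c :=
    ae_of_all _ fun ω ↦ (Real.norm_of_nonneg (hW0 ω)).trans_le (hWc ω)
  refine integral_le_integral_of_condExp_le hm (hg.mul_bdd hW_meas hW_bound) ?_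
  filter_upwards [condExp_mul_of_stronglyMeasurable_right hW (hf.mul_bdd hW_meas hW_bound) hf, hfg]
    with ω hpull hω
  exact hpull.trans_le (mul_le_mul_of_nonneg_right hω (hW0 ω))

lemma integral_mul_le_of_condExp_le (hm : m ≤ m0) [SigmaFinite (μ.trim hm)]
    (hW : StronglyMeasurable[m] W) (hW0 : 0 ≤ W) (hf0 : 0 ≤ f)
    (hf : Integrable f μ) (hg0 : 0 ≤ g) (hg : Integrable g μ)
    (hgW : Integrable (fun ω ↦ g ω * W ω) μ) (hfg : μ[f|m] ≤ᵐ[μ] g) :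
    Integrable (fun ω ↦ f ω * W ω) μ ∧ ∫ ω, f ω * W ω ∂μ ≤ ∫ ω, g ω * W ω ∂μ := by
  have hWn (n : ℕ) : StronglyMeasurable[m] fun ω ↦ min (W ω) n :=
    (continuous_id.min continuous_const).comp_stronglyMeasurable hW
  have hWn_bound (n : ℕ) : ∀ᵐ ω ∂μ, ‖min (W ω) n‖ ≤ n := ae_of_all _ fun ω ↦ by
    rw [Real.norm_of_nonneg (le_min (hW0 ω) n.cast_nonneg)]
    exact min_le_right _ _
  refine integrable_and_integral_le_of_tendsto_of_monotone (f := fun n ω ↦ f ω * min (W ω) n)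
    (fun n ↦ hf.mul_bdd ((hWn n).mono hm).aestronglyMeasurable (hWn_bound n))
    (fun n ↦ ae_of_all _ fun ω ↦ mul_nonneg (hf0 ω) (le_min (hW0 ω) n.cast_nonneg))
    (ae_of_all _ fun ω n k hnk ↦ mul_le_mul_of_nonneg_left
      (min_le_min_left _ (Nat.cast_le.2 hnk)) (hf0 ω))
    (ae_of_all _ fun ω ↦ tendsto_atTop_of_eventually_const (i₀ := ⌈W ω⌉₊) fun n hn ↦ by
      rw [min_eq_left ((Nat.le_ceil _).trans (Nat.cast_le.2 hn))])
    fun n ↦ ?_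
  refine (integral_mul_le_of_condExp_le_of_bounded hm (hWn n)
    (fun ω ↦ le_min (hW0 ω) n.cast_nonneg) (fun ω ↦ min_le_right _ _) hf hg hfg).trans ?_
  exact integral_mono (hg.mul_bdd ((hWn n).mono hm).aestronglyMeasurable (hWn_bound n)) hgW
    fun ω ↦ mul_le_mul_of_nonneg_left (min_le_left _ _) (hg0 ω)

variable {Z : Ω → ℝ} {C c : ℝ}

lemma integral_le_mul_of_condExp_le_const_mul [IsProbabilityMeasure μ] (hm : m ≤ m0)
    (hZ : MemLp Z 2 μ) (hC : 0 ≤ C) (hZC : ∫ ω, Z ω ^ 2 ∂μ ≤ C ^ 2) (hc : 0 ≤ c) (hfZ : μ[f|m] ≤ᵐ[μ] fun ω ↦ c * Z ω) :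
    ∫ ω, f ω ∂μ ≤ c * C :=
  calc ∫ ω, f ω ∂μ ≤ ∫ ω, c * Z ω ∂μ :=
        integral_le_integral_of_condExp_le hm ((hZ.integrable one_le_two).const_mul c) hfZ
    _ = c * ∫ ω, Z ω ∂μ := integral_const_mul _ _
    _ ≤ c * C := by gcongr; exact integral_le_of_integral_sq_le hZ hC hZC

lemma integral_mul_le_of_condExp_le_const_mul [IsFiniteMeasure μ] (hm : m ≤ m0)
    (hW : StronglyMeasurable[m] W) (hW0 : 0 ≤ W) (hW2 : MemLp W 2 μ) (hf0 : 0 ≤ f)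
    (hf : Integrable f μ) (hZ0 : 0 ≤ Z) (hZ : MemLp Z 2 μ) (hc : 0 ≤ c) (hfZ : μ[f|m] ≤ᵐ[μ] fun ω ↦ c * Z ω) :
    Integrable (fun ω ↦ f ω * W ω) μ ∧
      ∫ ω, f ω * W ω ∂μ ≤ c * (√(∫ ω, Z ω ^ 2 ∂μ) * √(∫ ω, W ω ^ 2 ∂μ)) := by
  obtain ⟨hfW, hfW_le⟩ := integral_mul_le_of_condExp_le hm hW hW0 hf0 hf
    (fun ω ↦ mul_nonneg hc (hZ0 ω)) ((hZ.integrable one_le_two).const_mul c)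
    (by simpa only [mul_assoc, Pi.mul_apply] using (hZ.integrable_mul hW2).const_mul c) hfZ
  refine ⟨hfW, hfW_le.trans ?_⟩
  calc ∫ ω, c * Z ω * W ω ∂μ = c * ∫ ω, Z ω * W ω ∂μ := by
        simp_rw [mul_assoc]
        exact integral_const_mul _ _
    _ ≤ c * (√(∫ ω, Z ω ^ 2 ∂μ) * √(∫ ω, W ω ^ 2 ∂μ)) := by
        gcongr
        exact integral_mul_le_sqrt_mul_sqrt (ae_of_all _ hZ0) (ae_of_all _ hW0) hZ hW2

end

lemma sq_min_abs_one_mul_sq_min_abs_one_le (x y : ℝ) :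
    min |x| 1 ^ 2 * min |y| 1 ^ 2 ≤ x ^ 2 * |y| := by
  have hx : min |x| 1 ^ 2 ≤ x ^ 2 := by
    rw [← sq_abs x]
    exact pow_le_pow_left₀ (le_min (abs_nonneg x) zero_le_one) (min_le_left _ _) 2
  have hy : min |y| 1 ^ 2 ≤ |y| := by
    rw [sq]
    exact (mul_le_of_le_one_left (le_min (abs_nonneg y) zero_le_one) (min_le_right _ _)).trans
      (min_le_left _ _)
  exact mul_le_mul hx hy (sq_nonneg _) (sq_nonneg _)

theorem two_increment_moment_bound_general {Ω : Type*} {m0 : MeasurableSpace Ω}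
    (P : Measure Ω) [IsProbabilityMeasure P] (T : ℝ)
    (F : Filtration ℝ m0) (X Z : ℝ → Ω → ℝ)
    (hXadapted : Adapted F X)
    (hX2 : ∀ t, 0 ≤ t → t ≤ T → MemLp (X t) 2 P)
    (hZnonneg : ∀ t ω, 0 ≤ Z t ω)
    (hZ2 : ∀ t, 0 ≤ t → t ≤ T → MemLp (Z t) 2 P)
    (C ϑ : ℝ) (hC : 0 ≤ C)
    (hZbound : ∀ t, 0 ≤ t → t ≤ T → ∫ ω, (Z t ω) ^ 2 ∂P ≤ C ^ 2)
    (hcond : ∀ t h : ℝ, 0 ≤ t → 0 ≤ h → t + h ≤ T →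
      ∀ᵐ ω ∂P, (P[(fun ω => (X (t + h) ω - X t ω) ^ 2)|F t]) ω ≤ h ^ ϑ * Z t ω) :
    ∀ t h : ℝ, 0 ≤ h → 0 ≤ t - h → t + h ≤ T →
      (∫ ω, (min |X (t + h) ω - X t ω| 1) ^ 2 * (min |X t ω - X (t - h) ω| 1) ^ 2 ∂P
          ≤ ∫ ω, (X (t + h) ω - X t ω) ^ 2 * |X t ω - X (t - h) ω| ∂P) ∧
      ∫ ω, (X (t + h) ω - X t ω) ^ 2 * |X t ω - X (t - h) ω| ∂P
          ≤ C ^ ((3 : ℝ) / 2) * h ^ (3 * ϑ / 2) := by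
  intro t h hh hth htT
  have ht0 : 0 ≤ t := by linarith
  have htT' : t ≤ T := by linarith
  set b : Ω → ℝ := fun ω ↦ X t ω - X (t - h) ω
  have hb : MemLp b 2 P := (hX2 t ht0 htT').sub (hX2 _ hth (by linarith))
  have hb_meas : StronglyMeasurable[F t] fun ω ↦ |b ω| :=
    continuous_abs.comp_stronglyMeasurable ((hXadapted t).sub
      ((hXadapted (t - h)).mono (F.mono (by linarith)) le_rfl)).stronglyMeasurable
  have hb_sq : ∫ ω, b ω ^ 2 ∂P ≤ h ^ ϑ * C := by
    have hcond_past := hcond (t - h) h hth hh (by linarith)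
    rw [sub_add_cancel] at hcond_past
    exact integral_le_mul_of_condExp_le_const_mul (F.le _) (hZ2 _ hth (by linarith)) hC
      (hZbound _ hth (by linarith)) (by positivity) hcond_past
  obtain ⟨hint, hbound⟩ := integral_mul_le_of_condExp_le_const_mul (F.le t) hb_meas
    (fun ω ↦ abs_nonneg _) hb.abs (fun ω ↦ sq_nonneg _)
    ((hX2 _ (by linarith) htT).sub (hX2 t ht0 htT')).integrable_sq (hZnonneg t)
    (hZ2 t ht0 htT') (by positivity) (hcond t h ht0 hh htT)
  refine ⟨integral_mono_of_nonneg (ae_of_all _ fun ω ↦ by positivity) hint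
    (ae_of_all _ fun ω ↦ sq_min_abs_one_mul_sq_min_abs_one_le _ _), hbound.trans ?_⟩
  calc h ^ ϑ * (√(∫ ω, Z t ω ^ 2 ∂P) * √(∫ ω, |b ω| ^ 2 ∂P)) ≤ h ^ ϑ * (C * √(h ^ ϑ * C)) := by
        gcongr
        · exact Real.sqrt_le_iff.2 ⟨hC, hZbound t ht0 htT'⟩
        · simpa only [sq_abs] using hb_sq
    _ = C ^ ((3 : ℝ) / 2) * h ^ (3 * ϑ / 2) := by
        rw [show 3 * ϑ / 2 = ϑ * (3 / 2) by ring, Real.rpow_mul hh,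
          ← mul_sqrt_eq_rpow_three_halves hC, ← mul_sqrt_eq_rpow_three_halves (by positivity),
          Real.sqrt_mul (by positivity)]
        ring

/-- Abstract two-increment moment bound (Chentsov-type criterion): if `X` is adapted with
finite second moments, `Z` is an adapted nonnegative process with `E[Z_t²] ≤ C²`, and
`E[(X_{t+h} − X_t)² | F_t] ≤ h^ϑ Z_t` a.s. for `0 ≤ t ≤ t+h ≤ T`, then for
`0 ≤ t−h ≤ t ≤ t+h ≤ T`:
`E[(min(|X_{t+h}−X_t|,1))² (min(|X_t−X_{t−h}|,1))²] ≤ E[(X_{t+h}−X_t)² |X_t−X_{t−h}|]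
  ≤ C^{3/2} h^{3ϑ/2}`. -/
theorem two_increment_moment_bound {Ω : Type*} {m0 : MeasurableSpace Ω}
    (P : Measure Ω) [IsProbabilityMeasure P] (T : ℝ) (hT : 0 ≤ T)
    (F : Filtration ℝ m0) (X Z : ℝ → Ω → ℝ)
    (hXadapted : Adapted F X) (hZadapted : Adapted F Z)
    (hX2 : ∀ t, 0 ≤ t → t ≤ T → MemLp (X t) 2 P)
    (hZnonneg : ∀ t ω, 0 ≤ Z t ω)
    (hZ2 : ∀ t, 0 ≤ t → t ≤ T → MemLp (Z t) 2 P)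
    (C ϑ : ℝ) (hC : 0 ≤ C) (hϑ0 : 0 < ϑ) (hϑ1 : ϑ ≤ 1)
    (hZbound : ∀ t, 0 ≤ t → t ≤ T → ∫ ω, (Z t ω) ^ 2 ∂P ≤ C ^ 2)
    (hcond : ∀ t h : ℝ, 0 ≤ t → 0 ≤ h → t + h ≤ T →
      ∀ᵐ ω ∂P, (P[(fun ω => (X (t + h) ω - X t ω) ^ 2)|F t]) ω ≤ h ^ ϑ * Z t ω) :
    ∀ t h : ℝ, 0 ≤ h → 0 ≤ t - h → t + h ≤ T →
      (∫ ω, (min |X (t + h) ω - X t ω| 1) ^ 2 * (min |X t ω - X (t - h) ω| 1) ^ 2 ∂P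
          ≤ ∫ ω, (X (t + h) ω - X t ω) ^ 2 * |X t ω - X (t - h) ω| ∂P) ∧
      ∫ ω, (X (t + h) ω - X t ω) ^ 2 * |X t ω - X (t - h) ω| ∂P
          ≤ C ^ ((3 : ℝ) / 2) * h ^ (3 * ϑ / 2) :=
  two_increment_moment_bound_general P T F X Z hXadapted hX2 hZnonneg hZ2 C ϑ hC hZbound hcond
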